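/- Let Ω ⊂ ℝ² be a closed cone with vertex at the origin and opening angle π/m for an integer m ≥ 1. Unfolding works: there is a map from broken rays in Ω reflecting on the two boundary rays of the cone to straight lines in ℝ², given by successive reflections across the boundary rays, such that the integral of a function f over the broken ray equals the integral of the symmetrized function f̃ (extended to ℝ² by the 2m reflections/rotations of the dihedral group of order 2m) over the corresponding line. -/

import Mathlib

open MeasureTheory

/-- The closed cone `{r e^{iθ} : r ≥ 0, 0 ≤ θ ≤ π/m}` in the plane (identified with ℂ). -/
noncomputable def coneSet (m : ℕ) : Set ℂ :=
  {z | ∃ r θ : ℝ, 0 ≤ r ∧ 0 ≤ θ ∧ θ ≤ Real.pi / m ∧ z = r * Complex.exp (θ * Complex.I)}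

/-- The unit direction of the `i`-th segment of a polygonal curve with vertices `x`. -/
noncomputable def dirC (x : ℕ → ℂ) (i : ℕ) : ℂ :=
  (‖x (i + 1) - x i‖ : ℂ)⁻¹ * (x (i + 1) - x i)

/-- A broken ray in the cone `coneSet m`, encoded by its vertices `x 0, …, x N`:
segments lie in the cone, interior vertices lie on one of the two boundary rays, and
at each interior vertex the reflection law holds (reflection across the ray `θ = 0`
is `v ↦ conj v`, reflection across the ray `θ = π/m` is `v ↦ e^{2iπ/m} conj v`). -/
noncomputable def IsConeBrokenRay (m N : ℕ) (x : ℕ → ℂ) : Prop :=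
  1 ≤ N ∧ (∀ i < N, x i ≠ x (i + 1)) ∧
  (∀ i < N, ∀ t ∈ Set.Icc (0 : ℝ) 1, x i + (t : ℂ) * (x (i + 1) - x i) ∈ coneSet m) ∧
  ∀ i, i + 2 ≤ N →
    ((∃ r : ℝ, 0 < r ∧ x (i + 1) = (r : ℂ)) ∧
        dirC x (i + 1) = starRingEnd ℂ (dirC x i)) ∨
    ((∃ r : ℝ, 0 < r ∧ x (i + 1) = (r : ℂ) * Complex.exp ((Real.pi / m) * Complex.I)) ∧
        dirC x (i + 1) =
          Complex.exp (2 * (Real.pi / m) * Complex.I) * starRingEnd ℂ (dirC x i))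

/-- The integral of `f` over a polygonal curve with respect to arc length. -/
noncomputable def brtSumC (f : ℂ → ℝ) (N : ℕ) (x : ℕ → ℂ) : ℝ :=
  ∑ i ∈ Finset.range N,
    ‖x (i + 1) - x i‖ * ∫ t in (0 : ℝ)..1, f (x i + (t : ℂ) * (x (i + 1) - x i))

/-!
At an interior vertex the reflection `ρ` across the mirror that is hit fixes the vertex and
maps the outgoing direction to the incoming one. Hence `ρ₀ ∘ ⋯ ∘ ρᵢ₋₁` maps the `i`-th segment
onto the arc-length interval `[Lᵢ, Lᵢ₊₁]` of the single line through `x 0` in the initial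
direction. As `f̃` is invariant under both mirrors and agrees with `f` on the cone, each segment
integral of `f` is the corresponding piece of the line integral of `f̃`.
-/

open ComplexConjugate Finset

/-- For `‖u‖ = 1`, the reflection across the line `ℝ u`. -/
def lineReflection (u : ℂ) : ℂ →ₗ[ℝ] ℂ where
  toFun z := u ^ 2 * conj z
  map_add' z w := by simp only [map_add, mul_add]
  map_smul' r z := by
    simp only [Complex.real_smul, map_mul, Complex.conj_ofReal, RingHom.id_apply]
    ring

section lineReflection

variable {u : ℂ}

lemma lineReflection_apply (u z : ℂ) : lineReflection u z = u ^ 2 * conj z := rfl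

lemma mul_conj_eq_one_of_norm_eq_one (hu : ‖u‖ = 1) : u * conj u = 1 := by
  rw [Complex.mul_conj', hu]
  norm_num

lemma lineReflection_ofReal_mul_self (hu : ‖u‖ = 1) (r : ℝ) :
    lineReflection u (r * u) = r * u := by
  rw [lineReflection_apply, map_mul, Complex.conj_ofReal]
  linear_combination (r : ℂ) * u * mul_conj_eq_one_of_norm_eq_one hu

lemma lineReflection_lineReflection (hu : ‖u‖ = 1) (z : ℂ) :
    lineReflection u (lineReflection u z) = z := by
  simp only [lineReflection_apply, map_mul, map_pow, Complex.conj_conj]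
  linear_combination (u * conj u + 1) * z * mul_conj_eq_one_of_norm_eq_one hu

end lineReflection

noncomputable def arcLength (x : ℕ → ℂ) (n : ℕ) : ℝ :=
  ∑ i ∈ range n, ‖x (i + 1) - x i‖

@[simp] lemma arcLength_zero (x : ℕ → ℂ) : arcLength x 0 = 0 := rfl

lemma arcLength_succ (x : ℕ → ℂ) (n : ℕ) :
    arcLength x (n + 1) = arcLength x n + ‖x (n + 1) - x n‖ :=
  sum_range_succ _ _

lemma sub_eq_norm_smul_dirC (x : ℕ → ℂ) (i : ℕ) :
    x (i + 1) - x i = ‖x (i + 1) - x i‖ • dirC x i := by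
  by_cases h : x (i + 1) - x i = 0
  · simp [dirC, h]
  · rw [dirC, Complex.real_smul, ← mul_assoc, mul_inv_cancel₀ (by simpa using h), one_mul]

lemma norm_dirC (x : ℕ → ℂ) {i : ℕ} (h : x i ≠ x (i + 1)) : ‖dirC x i‖ = 1 := by
  have h' : ‖x (i + 1) - x i‖ ≠ 0 := by simpa [sub_eq_zero] using h.symm
  rw [dirC, norm_mul, norm_inv, Complex.norm_real, norm_norm, inv_mul_cancel₀ h']

/-- When `ρ j` is the reflection at the vertex `x (j + 1)`, `unfoldMap ρ i` maps the `i`-th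
segment of the broken ray onto the unfolded line. -/
noncomputable def unfoldMap (ρ : ℕ → ℂ →ₗ[ℝ] ℂ) : ℕ → ℂ →ₗ[ℝ] ℂ
  | 0 => LinearMap.id
  | i + 1 => unfoldMap ρ i ∘ₗ ρ i

lemma unfoldMap_succ_apply (ρ : ℕ → ℂ →ₗ[ℝ] ℂ) (i : ℕ) (z : ℂ) :
    unfoldMap ρ (i + 1) z = unfoldMap ρ i (ρ i z) := rfl

section unfold

variable {N : ℕ} {x : ℕ → ℂ} {ρ : ℕ → ℂ →ₗ[ℝ] ℂ}

lemma unfoldMap_vertex_and_dirC (hfix : ∀ i, i + 2 ≤ N → ρ i (x (i + 1)) = x (i + 1))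
    (hdir : ∀ i, i + 2 ≤ N → ρ i (dirC x (i + 1)) = dirC x i) :
    ∀ i < N, unfoldMap ρ i (x i) = x 0 + arcLength x i • dirC x 0 ∧
      unfoldMap ρ i (dirC x i) = dirC x 0 := by
  intro i
  induction i with
  | zero => simp [unfoldMap]
  | succ i ih =>
    intro hi
    obtain ⟨hx, hd⟩ := ih (by omega)
    rw [unfoldMap_succ_apply, unfoldMap_succ_apply, hfix i hi, hdir i hi]
    refine ⟨?_, hd⟩
    rw [← add_sub_cancel (x i) (x (i + 1)), sub_eq_norm_smul_dirC, map_add, map_smul, hx, hd,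
      arcLength_succ, add_smul, add_assoc]

lemma unfoldMap_segment (hfix : ∀ i, i + 2 ≤ N → ρ i (x (i + 1)) = x (i + 1))
    (hdir : ∀ i, i + 2 ≤ N → ρ i (dirC x (i + 1)) = dirC x i) {i : ℕ} (hi : i < N) (t : ℝ) :
    unfoldMap ρ i (x i + t * (x (i + 1) - x i)) =
      x 0 + ((‖x (i + 1) - x i‖ * t + arcLength x i : ℝ) : ℂ) * dirC x 0 := by
  obtain ⟨hx, hd⟩ := unfoldMap_vertex_and_dirC hfix hdir i hi
  have hseg : x i + t * (x (i + 1) - x i) = x i + (t * ‖x (i + 1) - x i‖) • dirC x i := by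
    rw [mul_smul, ← sub_eq_norm_smul_dirC, Complex.real_smul]
  rw [hseg, map_add, map_smul, hx, hd]
  simp only [Complex.real_smul]
  push_cast
  ring

lemma comp_unfoldMap {g : ℂ → ℝ} (hg : ∀ i, i + 2 ≤ N → ∀ z, g (ρ i z) = g z) :
    ∀ i < N, ∀ z, g (unfoldMap ρ i z) = g z := by
  intro i
  induction i with
  | zero => simp [unfoldMap]
  | succ i ih =>
    intro hi z
    rw [unfoldMap_succ_apply, ih (by omega), hg i hi]

end unfold

theorem brtSumC_eq_intervalIntegral {N : ℕ} {x : ℕ → ℂ} {f : ℂ → ℝ} {φ : ℝ → ℝ}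
    (hφ : Continuous φ)
    (hseg : ∀ i < N, ∀ t ∈ Set.Icc (0 : ℝ) 1,
      f (x i + t * (x (i + 1) - x i)) = φ (‖x (i + 1) - x i‖ * t + arcLength x i)) :
    brtSumC f N x = ∫ t in (0 : ℝ)..arcLength x N, φ t := by
  calc brtSumC f N x = ∑ i ∈ range N, ∫ t in arcLength x i..arcLength x (i + 1), φ t := by
        refine sum_congr rfl fun i hi => ?_
        have hseg' := hseg i (mem_range.mp hi)
        rw [intervalIntegral.integral_congr fun t ht => hseg' t (by simpa using ht),
          ← smul_eq_mul, intervalIntegral.smul_integral_comp_mul_add, arcLength_succ,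
          mul_zero, zero_add, mul_one, add_comm]
    _ = ∫ t in (0 : ℝ)..arcLength x N, φ t := by
        rw [intervalIntegral.sum_integral_adjacent_intervals
          fun k _ => hφ.intervalIntegrable _ _, arcLength_zero]

/-- The unit directions of the two boundary rays of `coneSet m`. -/
noncomputable def coneMirrors (m : ℕ) : Set ℂ :=
  {1, Complex.exp ((Real.pi / m) * Complex.I)}

section cone

variable {m : ℕ} {u : ℂ}

lemma norm_eq_one_of_mem_coneMirrors (hu : u ∈ coneMirrors m) : ‖u‖ = 1 := by
  rcases hu with rfl | rfl
  · exact norm_one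
  · exact_mod_cast Complex.norm_exp_ofReal_mul_I (Real.pi / m)

lemma exp_pi_div_mul_I_sq (m : ℕ) :
    Complex.exp ((Real.pi / m) * Complex.I) ^ 2 = Complex.exp (2 * (Real.pi / m) * Complex.I) := by
  rw [← Complex.exp_nat_mul]
  push_cast
  ring_nf

lemma apply_lineReflection_of_mem_coneMirrors {g : ℂ → ℝ}
    (hsym0 : ∀ z : ℂ, g (conj z) = g z)
    (hsym1 : ∀ z : ℂ, g (Complex.exp (2 * (Real.pi / m) * Complex.I) * conj z) = g z)
    (hu : u ∈ coneMirrors m) (z : ℂ) : g (lineReflection u z) = g z := by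
  rcases hu with rfl | rfl
  · simpa [lineReflection_apply] using hsym0 z
  · rw [lineReflection_apply, exp_pi_div_mul_I_sq, hsym1]

lemma IsConeBrokenRay.exists_lineReflection {N : ℕ} {x : ℕ → ℂ} (h : IsConeBrokenRay m N x)
    {i : ℕ} (hi : i + 2 ≤ N) :
    ∃ u ∈ coneMirrors m, lineReflection u (x (i + 1)) = x (i + 1) ∧
      lineReflection u (dirC x (i + 1)) = dirC x i := by
  have key : ∀ u ∈ coneMirrors m, (∃ r : ℝ, x (i + 1) = r * u) →
      dirC x (i + 1) = lineReflection u (dirC x i) →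
      ∃ u ∈ coneMirrors m, lineReflection u (x (i + 1)) = x (i + 1) ∧
        lineReflection u (dirC x (i + 1)) = dirC x i := by
    rintro u hu ⟨r, hr⟩ hd
    have hu1 := norm_eq_one_of_mem_coneMirrors hu
    exact ⟨u, hu, by rw [hr, lineReflection_ofReal_mul_self hu1],
      by rw [hd, lineReflection_lineReflection hu1]⟩
  rcases h.2.2.2 i hi with ⟨⟨r, -, hr⟩, hd⟩ | ⟨⟨r, -, hr⟩, hd⟩
  · exact key 1 (Or.inl rfl) ⟨r, by rw [hr, mul_one]⟩ (by simpa [lineReflection_apply] using hd)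
  · exact key _ (Or.inr rfl) ⟨r, hr⟩ (by rw [hd, lineReflection_apply, exp_pi_div_mul_I_sq])

end cone

theorem stmt9_general (m : ℕ) (f ftil : ℂ → ℝ)
    (hft : Continuous ftil)
    (hext : ∀ z ∈ coneSet m, ftil z = f z)
    (hsym0 : ∀ z : ℂ, ftil (starRingEnd ℂ z) = ftil z)
    (hsym1 : ∀ z : ℂ,
      ftil (Complex.exp (2 * (Real.pi / m) * Complex.I) * starRingEnd ℂ z) = ftil z)
    (N : ℕ) (x : ℕ → ℂ) (h : IsConeBrokenRay m N x) :
    ∃ p v : ℂ, ‖v‖ = 1 ∧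
      brtSumC f N x =
        ∫ t in (0 : ℝ)..(∑ i ∈ Finset.range N, ‖x (i + 1) - x i‖),
          ftil (p + (t : ℂ) * v) := by
  have hmirror : ∀ i, ∃ u ∈ coneMirrors m, i + 2 ≤ N →
      lineReflection u (x (i + 1)) = x (i + 1) ∧ lineReflection u (dirC x (i + 1)) = dirC x i := by
    intro i
    by_cases hi : i + 2 ≤ N
    · obtain ⟨u, hu, hρ⟩ := h.exists_lineReflection hi
      exact ⟨u, hu, fun _ => hρ⟩
    · exact ⟨1, Or.inl rfl, fun h' => absurd h' hi⟩
  choose u hu hρ using hmirror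
  obtain ⟨hN, hne, hcone, -⟩ := h
  refine ⟨x 0, dirC x 0, norm_dirC x (hne 0 hN), ?_⟩
  refine brtSumC_eq_intervalIntegral (by fun_prop) fun i hi t ht => ?_
  rw [← hext _ (hcone i hi t ht),
    ← comp_unfoldMap (fun j _ => apply_lineReflection_of_mem_coneMirrors hsym0 hsym1 (hu j)) i hi,
    unfoldMap_segment (fun j hj => (hρ j hj).1) (fun j hj => (hρ j hj).2) hi]

/-- unfolding of broken rays in a cone of opening angle `π/m`: for every
broken ray in the cone there is a straight line (here: a unit-speed line segment of the
same total length) such that the integral of `f` over the broken ray equals the integral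
over that segment of the symmetrization `f̃` of `f` under the dihedral group of order
`2m` generated by the reflections across the two boundary rays. -/
theorem stmt9 (m : ℕ) (hm : 1 ≤ m) (f ftil : ℂ → ℝ)
    (hf : Continuous f) (hfc : HasCompactSupport f) (hft : Continuous ftil)
    (hext : ∀ z ∈ coneSet m, ftil z = f z)
    (hsym0 : ∀ z : ℂ, ftil (starRingEnd ℂ z) = ftil z)
    (hsym1 : ∀ z : ℂ,
      ftil (Complex.exp (2 * (Real.pi / m) * Complex.I) * starRingEnd ℂ z) = ftil z)
    (N : ℕ) (x : ℕ → ℂ) (h : IsConeBrokenRay m N x) :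
    ∃ p v : ℂ, ‖v‖ = 1 ∧
      brtSumC f N x =
        ∫ t in (0 : ℝ)..(∑ i ∈ Finset.range N, ‖x (i + 1) - x i‖),
          ftil (p + (t : ℂ) * v) :=
  stmt9_general m f ftil hft hext hsym0 hsym1 N x h
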